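/- Let G be a connected non-degenerate trigraph, and let G' be an antithickening of G with thickening map I such that: the sets I(v) of size at least 2 are exactly the parts of the inclusion-maximal square-connected homogeneous pairs of strong cliques of G, and for each such inclusion-maximal pair (A, B) there are semiadjacent vertices a, b of G' with I(a) = A and I(b) = B. Then G' is an optimal antithickening of G. -/

import Mathlib

/-- A trigraph on a vertex type `V`: a symmetric adjacency function with values in
`{1, 0, -1}`, zero on the diagonal, such that semiedges form a matching. -/
structure Trigraph (V : Type) where
  θ : V → V → ℤ
  range_mem : ∀ u v, θ u v = 1 ∨ θ u v = 0 ∨ θ u v = -1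
  symm : ∀ u v, θ u v = θ v u
  refl_zero : ∀ v, θ v v = 0
  semi_matching : ∀ u v w : V, u ≠ v → u ≠ w → v ≠ w → θ u v = 0 → θ u w ≠ 0

namespace Trigraph

variable {V V' V'' : Type}

/-- `u` and `v` are strongly adjacent. -/
def StrongAdj (G : Trigraph V) (u v : V) : Prop := G.θ u v = 1

/-- Distinct `u` and `v` are semiadjacent. -/
def SemiAdj (G : Trigraph V) (u v : V) : Prop := u ≠ v ∧ G.θ u v = 0

/-- Distinct `u` and `v` are adjacent. -/
def Adj (G : Trigraph V) (u v : V) : Prop := u ≠ v ∧ (G.θ u v = 1 ∨ G.θ u v = 0)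

/-- Distinct `u` and `v` are antiadjacent. -/
def AntiAdj (G : Trigraph V) (u v : V) : Prop := u ≠ v ∧ (G.θ u v = 0 ∨ G.θ u v = -1)

/-- `u` and `v` are strongly antiadjacent. -/
def StrongAntiAdj (G : Trigraph V) (u v : V) : Prop := G.θ u v = -1

/-- `X` is strongly complete to `Y`. -/
def StronglyComplete (G : Trigraph V) (X Y : Set V) : Prop :=
  ∀ u ∈ X, ∀ v ∈ Y, G.StrongAdj u v

/-- `X` is strongly anticomplete to `Y`. -/
def StronglyAnticomplete (G : Trigraph V) (X Y : Set V) : Prop :=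
  ∀ u ∈ X, ∀ v ∈ Y, G.StrongAntiAdj u v

/-- A strong clique: pairwise strongly adjacent vertices. -/
def IsStrongClique (G : Trigraph V) (K : Set V) : Prop := K.Pairwise G.StrongAdj

/-- A stable set: pairwise antiadjacent vertices. -/
def IsStableSet (G : Trigraph V) (S : Set V) : Prop := S.Pairwise G.AntiAdj

/-- The neighbourhood of a vertex: the set of vertices adjacent to it. -/
def neighborhood (G : Trigraph V) (v : V) : Set V := {u | G.Adj v u}

/-- Claw-free: no vertex has three pairwise antiadjacent vertices in its neighbourhood. -/
def ClawFree (G : Trigraph V) : Prop :=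
  ¬ ∃ v a b c : V, G.Adj v a ∧ G.Adj v b ∧ G.Adj v c ∧
    G.AntiAdj a b ∧ G.AntiAdj a c ∧ G.AntiAdj b c

/-- Cobipartite: the vertex set is the union of two strong cliques. -/
def Cobipartite (G : Trigraph V) : Prop :=
  ∃ K1 K2 : Set V, G.IsStrongClique K1 ∧ G.IsStrongClique K2 ∧ K1 ∪ K2 = Set.univ

/-- Quasi-line: the neighbourhood of every vertex is the union of two strong cliques. -/
def QuasiLine (G : Trigraph V) : Prop :=
  ∀ v : V, ∃ K1 K2 : Set V, G.IsStrongClique K1 ∧ G.IsStrongClique K2 ∧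
    G.neighborhood v = K1 ∪ K2

/-- Connected: any two vertices are joined by a sequence of consecutively adjacent vertices. -/
def Connected (G : Trigraph V) : Prop :=
  ∀ u v : V, Relation.ReflTransGen G.Adj u v

/-- Non-degenerate: quasi-line and not cobipartite, or claw-free with stability number ≥ 3. -/
def NonDegenerate (G : Trigraph V) : Prop :=
  (G.QuasiLine ∧ ¬ G.Cobipartite) ∨
  (G.ClawFree ∧ ∃ S : Set V, G.IsStableSet S ∧ 3 ≤ S.ncard)

/-- A homogeneous set: `|V| > |X| ≥ 2` and every vertex outside `X` is strongly complete
or strongly anticomplete to `X`. -/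
def HomogeneousSet (G : Trigraph V) (X : Set V) : Prop :=
  2 ≤ X.ncard ∧ X ≠ Set.univ ∧
  ∀ v ∉ X, G.StronglyComplete {v} X ∨ G.StronglyAnticomplete {v} X

/-- `v1 v2 v3 v4` is a square: the pairs `v1v3`, `v2v4` are antiadjacent and the other
four pairs are adjacent. -/
def IsSquare (G : Trigraph V) (v1 v2 v3 v4 : V) : Prop :=
  G.AntiAdj v1 v3 ∧ G.AntiAdj v2 v4 ∧
  G.Adj v1 v2 ∧ G.Adj v2 v3 ∧ G.Adj v3 v4 ∧ G.Adj v4 v1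

/-- `X` contains a square. -/
def HasSquareIn (G : Trigraph V) (X : Set V) : Prop :=
  ∃ v1 v2 v3 v4 : V, G.IsSquare v1 v2 v3 v4 ∧ ({v1, v2, v3, v4} : Set V) ⊆ X

/-- Homogeneous pair of strong cliques `(A, B)`. -/
def HPOSC (G : Trigraph V) (A B : Set V) : Prop :=
  A.Nonempty ∧ B.Nonempty ∧ Disjoint A B ∧
  G.IsStrongClique A ∧ G.IsStrongClique B ∧
  ¬ (∃ a b : V, A = {a} ∧ B = {b}) ∧
  ∀ v ∉ A ∪ B,
    (G.StronglyComplete {v} A ∨ G.StronglyAnticomplete {v} A) ∧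
    (G.StronglyComplete {v} B ∨ G.StronglyAnticomplete {v} B)

/-- Deletion-minimal homogeneous pair of strong cliques. -/
def DeletionMinimal (G : Trigraph V) (A B : Set V) : Prop :=
  G.HPOSC A B ∧ G.HasSquareIn (A ∪ B) ∧
  (∀ a ∈ A, ¬ G.StronglyComplete {a} B ∧ ¬ G.StronglyAnticomplete {a} B) ∧
  (∀ b ∈ B, ¬ G.StronglyComplete {b} A ∧ ¬ G.StronglyAnticomplete {b} A)

/-- There is a square contained in `X` intersecting both `S1` and `S2`. -/
def SquareMeets (G : Trigraph V) (X S1 S2 : Set V) : Prop :=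
  ∃ v1 v2 v3 v4 : V, G.IsSquare v1 v2 v3 v4 ∧ ({v1, v2, v3, v4} : Set V) ⊆ X ∧
    (({v1, v2, v3, v4} : Set V) ∩ S1).Nonempty ∧
    (({v1, v2, v3, v4} : Set V) ∩ S2).Nonempty

/-- Square-connected homogeneous pair of strong cliques. -/
def SquareConnected (G : Trigraph V) (A B : Set V) : Prop :=
  G.HPOSC A B ∧
  (∀ A' A'' : Set V, A'.Nonempty → A''.Nonempty → A' ∪ A'' = A → Disjoint A' A'' →
    G.SquareMeets (A ∪ B) A' A'') ∧
  (∀ B' B'' : Set V, B'.Nonempty → B''.Nonempty → B' ∪ B'' = B → Disjoint B' B'' →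
    G.SquareMeets (A ∪ B) B' B'')

/-- Inclusion-maximal square-connected homogeneous pair of strong cliques. -/
def MaxSquareConnected (G : Trigraph V) (A B : Set V) : Prop :=
  G.SquareConnected A B ∧
  ∀ A' B' : Set V, G.SquareConnected A' B' → A ⊆ A' → B ⊆ B' → A' = A ∧ B' = B

/-- Two homogeneous pairs have skew intersection if a part of one intersects both
parts of the other. -/
def SkewIntersection (A1 B1 A2 B2 : Set V) : Prop :=
  ((A1 ∩ A2).Nonempty ∧ (A1 ∩ B2).Nonempty) ∨
  ((B1 ∩ A2).Nonempty ∧ (B1 ∩ B2).Nonempty) ∨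
  ((A2 ∩ A1).Nonempty ∧ (A2 ∩ B1).Nonempty) ∨
  ((B2 ∩ A1).Nonempty ∧ (B2 ∩ B1).Nonempty)

/-- Laminar: contains no square-connected homogeneous pair of strong cliques. -/
def Laminar (G : Trigraph V) : Prop := ¬ ∃ A B : Set V, G.SquareConnected A B

/-- `G` is a thickening of `G'` via the map `I` (equivalently, `G'` is an antithickening
of `G`): the `I v` are nonempty strong cliques partitioning `V(G)` respecting adjacency. -/
def IsThickening (G : Trigraph V) (G' : Trigraph V') (I : V' → Set V) : Prop :=
  (∀ v : V', (I v).Nonempty ∧ G.IsStrongClique (I v)) ∧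
  (∀ u v : V', u ≠ v → Disjoint (I u) (I v)) ∧
  (⋃ v : V', I v) = Set.univ ∧
  ∀ u v : V', u ≠ v →
    (G'.StrongAdj u v → G.StronglyComplete (I u) (I v)) ∧
    (G'.StrongAntiAdj u v → G.StronglyAnticomplete (I u) (I v)) ∧
    (G'.SemiAdj u v →
      ¬ G.StronglyComplete (I u) (I v) ∧ ¬ G.StronglyAnticomplete (I u) (I v))

/-- `G'` (with thickening map `I`) is an optimal antithickening of `G`: it is a laminar
antithickening with the maximum possible number of vertices. -/
def OptimalAntithickening (G : Trigraph V) (G' : Trigraph V') (I : V' → Set V) : Prop :=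
  G.IsThickening G' I ∧ G'.Laminar ∧
  ∀ (W : Type) (H : Trigraph W) (J : W → Set V),
    G.IsThickening H J → H.Laminar → Nat.card W ≤ Nat.card V'

/-- Isomorphism of trigraphs. -/
def Isomorphic (G1 : Trigraph V) (G2 : Trigraph V') : Prop :=
  ∃ f : V ≃ V', ∀ u v : V, G2.θ (f u) (f v) = G1.θ u v

end Trigraph

/-!
Contracting every inclusion-maximal square-connected pair `(A, B)` of `G` to a semiedge gives a
laminar antithickening `G'`: a square-connected pair of `G'` blows up to a square-connected pair
of `G` (squares lift through thickenings, and a partition that splits a contracted class is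
served by the pair that class came from), which lies in a maximal pair and therefore collapses
to two single vertices.

For optimality let `H` be a laminar antithickening of `G` and `(A, B)` a maximal pair. No class
of `H` meets both `A` and `B`: such a class and its semiadjacent partner, cut down to `A ∪ B`,
would form a square-connected pair of `G` one part of which meets both `A` and `B`, whereas
every square-connected pair of `G` lies inside a maximal one, whose parts are classes of `G'`.
Hence at most two classes of `H` meet `A ∪ B`, for otherwise the classes meeting `A` and those
meeting `B` would form a square-connected pair of `H`. All other classes of `G'` are single
vertices, so counting the classes of `H` along the orbits of the semiedge involution of `G'`
gives `|V(H)| ≤ |V(G')|`.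
-/

theorem exists_separated_of_union_eq {α : Type} {S T U U' : Set α} (hS : S.Nonempty)
    (hT : T.Nonempty) (hU : U.Nonempty) (hU' : U'.Nonempty) (h : U ∪ U' = S ∪ T)
    (hd : Disjoint U U') : ∃ s ∈ S, ∃ t ∈ T, (s ∈ U ∧ t ∈ U') ∨ (s ∈ U' ∧ t ∈ U) := by
  by_contra hcon
  obtain ⟨s₀, hs₀⟩ := hS
  obtain ⟨t₀, ht₀⟩ := hT
  have side : ∀ x ∈ S ∪ T, x ∈ U' ↔ x ∉ U := fun x hx =>
    ⟨fun hx' hx => hd.ne_of_mem hx hx' rfl,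
      fun hxU => ((h ▸ hx : x ∈ U ∪ U')).resolve_left hxU⟩
  have same : ∀ s ∈ S, ∀ t ∈ T, (s ∈ U ↔ t ∈ U) := by
    refine fun s hs t ht => ⟨fun hsU => ?_, fun htU => ?_⟩ <;> by_contra hn
    · exact hcon ⟨s, hs, t, ht, Or.inl ⟨hsU, (side t (Or.inr ht)).2 hn⟩⟩
    · exact hcon ⟨s, hs, t, ht, Or.inr ⟨(side s (Or.inl hs)).2 hn, htU⟩⟩
  have all : ∀ x ∈ S ∪ T, (x ∈ U ↔ t₀ ∈ U) := by
    rintro x (hx | hx)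
    · exact same x hx t₀ ht₀
    · exact (same s₀ hs₀ x hx).symm.trans (same s₀ hs₀ t₀ ht₀)
  obtain ⟨u, hu⟩ := hU
  obtain ⟨u', hu'⟩ := hU'
  have huST : u ∈ S ∪ T := h ▸ Or.inl hu
  have hu'ST : u' ∈ S ∪ T := h ▸ Or.inr hu'
  exact (side u' hu'ST).1 hu' ((all u' hu'ST).2 ((all u huST).1 hu))

theorem card_le_card_of_involutive {α β : Type} [Finite α] [Finite β] (p : β → β)
    (hp : Function.Involutive p) (f : α → β)
    (hf : ∀ b, {a | f a = b ∨ f a = p b}.ncard ≤ ({b, p b} : Set β).ncard) :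
    Nat.card α ≤ Nat.card β := by
  classical
  have := Fintype.ofFinite α
  have := Fintype.ofFinite β
  let orbit : β → Finset β := fun b => {b, p b}
  have horbit : ∀ b b', orbit b' = orbit b ↔ b' = b ∨ b' = p b := by
    intro b b'
    refine ⟨fun h => ?_, ?_⟩
    · have hb' : b' ∈ orbit b := h ▸ Finset.mem_insert_self b' {p b'}
      simpa [orbit] using hb'
    rintro (rfl | rfl)
    · rfl
    · simp [orbit, hp b, Finset.pair_comm]
  rw [Nat.card_eq_fintype_card, Nat.card_eq_fintype_card, ← Finset.card_univ, ← Finset.card_univ,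
    Finset.card_eq_sum_card_fiberwise (f := fun a => orbit (f a)) (t := Finset.univ.image orbit)
      (fun a _ => by simp),
    Finset.card_eq_sum_card_fiberwise (f := orbit) (t := Finset.univ.image orbit)
      (fun a _ => by simp)]
  refine Finset.sum_le_sum fun s hs => ?_
  obtain ⟨b, -, rfl⟩ := Finset.mem_image.1 hs
  simp only [horbit]
  rw [← Set.ncard_coe_finset, ← Set.ncard_coe_finset]
  simpa [Set.insert_def] using hf b

namespace Trigraph

variable {V V' W : Type}

section Basic

variable {G : Trigraph V} {u v w : V} {X Y : Set V}

theorem SemiAdj.symm (h : G.SemiAdj u v) : G.SemiAdj v u :=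
  ⟨h.1.symm, by rw [G.symm]; exact h.2⟩

theorem Adj.symm (h : G.Adj u v) : G.Adj v u :=
  ⟨h.1.symm, by rw [G.symm]; exact h.2⟩

theorem AntiAdj.symm (h : G.AntiAdj u v) : G.AntiAdj v u :=
  ⟨h.1.symm, by rw [G.symm]; exact h.2⟩

theorem adj_iff_not_strongAntiAdj : G.Adj u v ↔ u ≠ v ∧ ¬ G.StrongAntiAdj u v := by
  unfold Adj StrongAntiAdj
  rcases G.range_mem u v with h | h | h <;> simp [h]

theorem antiAdj_iff_not_strongAdj : G.AntiAdj u v ↔ u ≠ v ∧ ¬ G.StrongAdj u v := by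
  unfold AntiAdj StrongAdj
  rcases G.range_mem u v with h | h | h <;> simp [h]

theorem StrongAdj.ne (h : G.StrongAdj u v) : u ≠ v := by
  rintro rfl
  simp [StrongAdj, G.refl_zero] at h

theorem StrongAntiAdj.ne (h : G.StrongAntiAdj u v) : u ≠ v := by
  rintro rfl
  simp [StrongAntiAdj, G.refl_zero] at h

theorem StrongAdj.adj (h : G.StrongAdj u v) : G.Adj u v := ⟨h.ne, Or.inl h⟩

theorem StrongAntiAdj.antiAdj (h : G.StrongAntiAdj u v) : G.AntiAdj u v := ⟨h.ne, Or.inr h⟩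

theorem StrongAdj.not_antiAdj (h : G.StrongAdj u v) : ¬ G.AntiAdj u v :=
  fun h' => (antiAdj_iff_not_strongAdj.1 h').2 h

theorem StrongAntiAdj.not_adj (h : G.StrongAntiAdj u v) : ¬ G.Adj u v :=
  fun h' => (adj_iff_not_strongAntiAdj.1 h').2 h

theorem SemiAdj.adj (h : G.SemiAdj u v) : G.Adj u v := ⟨h.1, Or.inr h.2⟩

theorem SemiAdj.antiAdj (h : G.SemiAdj u v) : G.AntiAdj u v := ⟨h.1, Or.inl h.2⟩

theorem strongAdj_or_semiAdj_or_strongAntiAdj (h : u ≠ v) :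
    G.StrongAdj u v ∨ G.SemiAdj u v ∨ G.StrongAntiAdj u v := by
  rcases G.range_mem u v with h' | h' | h'
  exacts [Or.inl h', Or.inr (Or.inl ⟨h, h'⟩), Or.inr (Or.inr h')]

theorem SemiAdj.unique (h₁ : G.SemiAdj u v) (h₂ : G.SemiAdj u w) : v = w := by
  by_contra hvw
  exact G.semi_matching u v w h₁.1 h₂.1 hvw h₁.2 h₂.2

theorem IsStrongClique.not_antiAdj {K : Set V} (hK : G.IsStrongClique K) (hu : u ∈ K)
    (hv : v ∈ K) : ¬ G.AntiAdj u v :=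
  fun h => (hK hu hv h.1).not_antiAdj h

theorem IsStrongClique.adj {K : Set V} (hK : G.IsStrongClique K) (hu : u ∈ K)
    (hv : v ∈ K) (hne : u ≠ v) : G.Adj u v :=
  (hK hu hv hne).adj

theorem stronglyComplete_singleton :
    G.StronglyComplete {v} X ↔ ∀ x ∈ X, G.StrongAdj v x := by
  simp [StronglyComplete]

theorem stronglyAnticomplete_singleton :
    G.StronglyAnticomplete {v} X ↔ ∀ x ∈ X, G.StrongAntiAdj v x := by
  simp [StronglyAnticomplete]

theorem StronglyComplete.mono (h : G.StronglyComplete X Y) {X' Y' : Set V} (hX : X' ⊆ X)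
    (hY : Y' ⊆ Y) : G.StronglyComplete X' Y' :=
  fun x hx y hy => h x (hX hx) y (hY hy)

theorem StronglyAnticomplete.mono (h : G.StronglyAnticomplete X Y) {X' Y' : Set V}
    (hX : X' ⊆ X) (hY : Y' ⊆ Y) : G.StronglyAnticomplete X' Y' :=
  fun x hx y hy => h x (hX hx) y (hY hy)

end Basic

section Squares

variable {G : Trigraph V} {A B : Set V} {v₁ v₂ v₃ v₄ : V}

theorem IsSquare.rotate (h : G.IsSquare v₁ v₂ v₃ v₄) : G.IsSquare v₂ v₃ v₄ v₁ :=
  ⟨h.2.1, h.1.symm, h.2.2.2.1, h.2.2.2.2.1, h.2.2.2.2.2, h.2.2.1⟩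

theorem IsSquare.reflect (h : G.IsSquare v₁ v₂ v₃ v₄) : G.IsSquare v₁ v₄ v₃ v₂ :=
  ⟨h.1, h.2.1.symm, h.2.2.2.2.2.symm, h.2.2.2.2.1.symm, h.2.2.2.1.symm, h.2.2.1.symm⟩

theorem mem_of_antiAdj_of_mem_union (hA : G.IsStrongClique A) {x y : V} (hxy : G.AntiAdj x y)
    (hx : x ∈ A) (hy : y ∈ A ∪ B) : y ∈ B :=
  hy.resolve_left fun hyA => hA.not_antiAdj hx hyA hxy

theorem IsSquare.exists_isSquare_of_mem_left (hA : G.IsStrongClique A)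
    (hsq : G.IsSquare v₁ v₂ v₃ v₄)
    (hsub : ({v₁, v₂, v₃, v₄} : Set V) ⊆ A ∪ B) {z z' : V}
    (hz : z ∈ ({v₁, v₂, v₃, v₄} : Set V)) (hz' : z' ∈ ({v₁, v₂, v₃, v₄} : Set V))
    (hzA : z ∈ A) (hz'A : z' ∈ A) (hne : z ≠ z') :
    ∃ b ∈ B, ∃ b' ∈ B, G.IsSquare z z' b b' := by
  have read : ∀ {x₁ x₂ x₃ x₄ : V}, G.IsSquare x₁ x₂ x₃ x₄ → x₁ ∈ A → x₂ ∈ A →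
      x₃ ∈ A ∪ B → x₄ ∈ A ∪ B → ∃ b ∈ B, ∃ b' ∈ B, G.IsSquare x₁ x₂ b b' :=
    fun h h₁ h₂ h₃ h₄ => ⟨_, mem_of_antiAdj_of_mem_union hA h.1 h₁ h₃,
      _, mem_of_antiAdj_of_mem_union hA h.2.1 h₂ h₄, h⟩
  have m₁ : v₁ ∈ A ∪ B := hsub (by simp)
  have m₂ : v₂ ∈ A ∪ B := hsub (by simp)
  have m₃ : v₃ ∈ A ∪ B := hsub (by simp)
  have m₄ : v₄ ∈ A ∪ B := hsub (by simp)
  simp only [Set.mem_insert_iff, Set.mem_singleton_iff] at hz hz'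
  rcases hz with rfl | rfl | rfl | rfl <;> rcases hz' with rfl | rfl | rfl | rfl
  all_goals first
    | exact absurd rfl hne
    | exact absurd hsq.1 (hA.not_antiAdj ‹_› ‹_›)
    | exact absurd hsq.1.symm (hA.not_antiAdj ‹_› ‹_›)
    | exact absurd hsq.2.1 (hA.not_antiAdj ‹_› ‹_›)
    | exact absurd hsq.2.1.symm (hA.not_antiAdj ‹_› ‹_›)
    | exact read hsq ‹_› ‹_› ‹_› ‹_›
    | exact read hsq.rotate ‹_› ‹_› ‹_› ‹_›
    | exact read hsq.rotate.rotate ‹_› ‹_› ‹_› ‹_›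
    | exact read hsq.rotate.rotate.rotate ‹_› ‹_› ‹_› ‹_›
    | exact read hsq.reflect ‹_› ‹_› ‹_› ‹_›
    | exact read hsq.reflect.rotate ‹_› ‹_› ‹_› ‹_›
    | exact read hsq.reflect.rotate.rotate ‹_› ‹_› ‹_› ‹_›
    | exact read hsq.reflect.rotate.rotate.rotate ‹_› ‹_› ‹_› ‹_›

theorem exists_ne_mem_of_hasSquareIn (hB : G.IsStrongClique B) (h : G.HasSquareIn (A ∪ B)) :
    ∃ x ∈ A, ∃ y ∈ A, x ≠ y := by
  obtain ⟨v₁, v₂, v₃, v₄, hsq, hsub⟩ := h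
  have one_in_A : ∀ {x y : V}, G.AntiAdj x y → x ∈ A ∪ B → y ∈ A ∪ B → x ∈ A ∨ y ∈ A := by
    rintro x y hxy (hx | hx) hy
    · exact Or.inl hx
    · exact Or.inr (mem_of_antiAdj_of_mem_union hB hxy hx (Or.symm hy))
  obtain ⟨an₁₃, an₂₄, ad₁₂, ad₂₃, ad₃₄, ad₄₁⟩ := hsq
  rcases one_in_A an₁₃ (hsub (by simp)) (hsub (by simp)) with h₁ | h₃ <;>
    rcases one_in_A an₂₄ (hsub (by simp)) (hsub (by simp)) with h₂ | h₄
  exacts [⟨_, h₁, _, h₂, ad₁₂.1⟩, ⟨_, h₁, _, h₄, ad₄₁.1.symm⟩, ⟨_, h₃, _, h₂, ad₂₃.1.symm⟩,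
    ⟨_, h₃, _, h₄, ad₃₄.1⟩]

end Squares

section SquareConnected

variable {G : Trigraph V} {A B : Set V} {v : V}

namespace HPOSC

theorem symm (h : G.HPOSC A B) : G.HPOSC B A := by
  obtain ⟨hA, hB, hAB, hcA, hcB, hns, hhom⟩ := h
  refine ⟨hB, hA, hAB.symm, hcB, hcA, fun ⟨b, a, hb, ha⟩ => hns ⟨a, b, ha, hb⟩, fun v hv => ?_⟩
  exact (hhom v (by rwa [Set.union_comm])).symm

theorem disjoint (h : G.HPOSC A B) : Disjoint A B := h.2.2.1

theorem isStrongClique_left (h : G.HPOSC A B) : G.IsStrongClique A := h.2.2.2.1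

theorem isStrongClique_right (h : G.HPOSC A B) : G.IsStrongClique B := h.2.2.2.2.1

theorem homogeneous_left (h : G.HPOSC A B) (hv : v ∉ A ∪ B) :
    G.StronglyComplete {v} A ∨ G.StronglyAnticomplete {v} A :=
  (h.2.2.2.2.2.2 v hv).1

theorem stronglyComplete_of_adj (h : G.HPOSC A B) (hv : v ∉ A ∪ B) {a : V} (ha : a ∈ A)
    (hva : G.Adj v a) : G.StronglyComplete {v} A :=
  (h.homogeneous_left hv).resolve_right fun hanti =>
    (stronglyAnticomplete_singleton.1 hanti a ha).not_adj hva

theorem stronglyAnticomplete_of_antiAdj (h : G.HPOSC A B) (hv : v ∉ A ∪ B) {a : V}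
    (ha : a ∈ A) (hva : G.AntiAdj v a) : G.StronglyAnticomplete {v} A :=
  (h.homogeneous_left hv).resolve_left fun hc =>
    (stronglyComplete_singleton.1 hc a ha).not_antiAdj hva

theorem stronglyComplete_union (h : G.HPOSC A B) (hv : v ∉ A ∪ B) {a b : V} (ha : a ∈ A)
    (hb : b ∈ B) (hva : G.Adj v a) (hvb : G.Adj v b) :
    G.StronglyComplete {v} (A ∪ B) := by
  have hA := stronglyComplete_singleton.1 (h.stronglyComplete_of_adj hv ha hva)
  have hB := stronglyComplete_singleton.1
    (h.symm.stronglyComplete_of_adj (by rwa [Set.union_comm]) hb hvb)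
  exact stronglyComplete_singleton.2 fun x hx => hx.elim (hA x) (hB x)

end HPOSC

namespace SquareConnected

theorem symm (h : G.SquareConnected A B) : G.SquareConnected B A := by
  obtain ⟨hp, hA, hB⟩ := h
  exact ⟨hp.symm, fun B' B'' h₁ h₂ h₃ h₄ => Set.union_comm A B ▸ hB B' B'' h₁ h₂ h₃ h₄,
    fun A' A'' h₁ h₂ h₃ h₄ => Set.union_comm A B ▸ hA A' A'' h₁ h₂ h₃ h₄⟩

theorem squareMeets_singleton (h : G.SquareConnected A B) {a a' : V} (ha : a ∈ A)
    (ha' : a' ∈ A) (hne : a ≠ a') : G.SquareMeets (A ∪ B) {a} (A \ {a}) :=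
  h.2.1 {a} (A \ {a}) (Set.singleton_nonempty a) ⟨a', ha', hne.symm⟩
    (by simp [Set.insert_eq_of_mem ha]) Set.disjoint_sdiff_right

theorem two_le_ncard_right [Finite V] (h : G.SquareConnected A B) (hA : 2 ≤ A.ncard) :
    2 ≤ B.ncard := by
  obtain ⟨a, ha, a', ha', hne⟩ := (Set.one_lt_ncard).1 hA
  obtain ⟨v₁, v₂, v₃, v₄, hsq, hsub, -⟩ := h.squareMeets_singleton ha ha' hne
  obtain ⟨b, hb, b', hb', hbb'⟩ :=
    exists_ne_mem_of_hasSquareIn h.1.isStrongClique_left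
      ⟨v₁, v₂, v₃, v₄, hsq, Set.union_comm A B ▸ hsub⟩
  exact (Set.one_lt_ncard).2 ⟨b, hb, b', hb', hbb'⟩

theorem two_le_ncard [Finite V] (h : G.SquareConnected A B) : 2 ≤ A.ncard ∧ 2 ≤ B.ncard := by
  by_cases hA : 2 ≤ A.ncard
  · exact ⟨hA, h.two_le_ncard_right hA⟩
  by_cases hB : 2 ≤ B.ncard
  · exact ⟨h.symm.two_le_ncard_right hB, hB⟩
  obtain ⟨hAne, hBne, -, -, -, hns, -⟩ := h.1
  rcases (Set.ncard_le_one_iff_eq).1 (by omega : A.ncard ≤ 1) with rfl | ⟨a, rfl⟩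
  · simp at hAne
  rcases (Set.ncard_le_one_iff_eq).1 (by omega : B.ncard ≤ 1) with rfl | ⟨b, rfl⟩
  · simp at hBne
  exact absurd ⟨a, b, rfl, rfl⟩ hns

theorem exists_antiAdj_and_exists_adj [Finite V] (h : G.SquareConnected A B) {a : V}
    (ha : a ∈ A) : (∃ b ∈ B, G.AntiAdj a b) ∧ (∃ b ∈ B, G.Adj a b) := by
  obtain ⟨a', ha', hne⟩ := Set.exists_ne_of_one_lt_ncard h.two_le_ncard.1 a
  obtain ⟨v₁, v₂, v₃, v₄, hsq, hsub, ⟨z, hz, rfl⟩, ⟨z', hz', hz'A, hz'a⟩⟩ :=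
    h.squareMeets_singleton ha ha' hne.symm
  obtain ⟨b, hb, b', hb', hsq'⟩ :=
    hsq.exists_isSquare_of_mem_left h.1.isStrongClique_left hsub hz hz' ha hz'A (Ne.symm hz'a)
  exact ⟨⟨b, hb, hsq'.1⟩, ⟨b', hb', hsq'.2.2.2.2.2.symm⟩⟩

theorem exists_maxSquareConnected [Finite V] (h : G.SquareConnected A B) :
    ∃ A' B', G.MaxSquareConnected A' B' ∧ A ⊆ A' ∧ B ⊆ B' := by
  obtain ⟨⟨A', B'⟩, ⟨hsc, hA, hB⟩, hmax⟩ := Set.Finite.exists_maximalFor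
    (fun p : Set V × Set V => p.1.ncard + p.2.ncard)
    {p | G.SquareConnected p.1 p.2 ∧ A ⊆ p.1 ∧ B ⊆ p.2} (Set.toFinite _)
    ⟨(A, B), h, subset_rfl, subset_rfl⟩
  refine ⟨A', B', ⟨hsc, fun A'' B'' hsc' hA' hB' => ?_⟩, hA, hB⟩
  have hle : A''.ncard + B''.ncard ≤ A'.ncard + B'.ncard :=
    hmax (j := (A'', B'')) ⟨hsc', hA.trans hA', hB.trans hB'⟩
      (Nat.add_le_add (Set.ncard_le_ncard hA') (Set.ncard_le_ncard hB'))
  have h₁ : A'.ncard ≤ A''.ncard := Set.ncard_le_ncard hA'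
  have h₂ : B'.ncard ≤ B''.ncard := Set.ncard_le_ncard hB'
  exact ⟨(Set.eq_of_subset_of_ncard_le hA' (by omega)).symm,
    (Set.eq_of_subset_of_ncard_le hB' (by omega)).symm⟩

end SquareConnected

theorem SquareMeets.mono {X X' S S' T T' : Set V} (h : G.SquareMeets X S T)
    (hX : X ⊆ X') (hS : S ⊆ S') (hT : T ⊆ T') : G.SquareMeets X' S' T' :=
  let ⟨v₁, v₂, v₃, v₄, hsq, hsub, hm, hm'⟩ := h
  ⟨v₁, v₂, v₃, v₄, hsq, hsub.trans hX, hm.mono (Set.inter_subset_inter_right _ hS),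
    hm'.mono (Set.inter_subset_inter_right _ hT)⟩

theorem HPOSC.mem_right_of_semiAdj {a b : V} (h : G.HPOSC A B) (ha : a ∈ A)
    (hab : G.SemiAdj a b) : b ∈ B := by
  have hbA : b ∉ A := fun hb => h.isStrongClique_left.not_antiAdj ha hb hab.antiAdj
  by_contra hbB
  rcases h.homogeneous_left (v := b) (by simp [hbA, hbB]) with hc | hc
  · exact (stronglyComplete_singleton.1 hc a ha).not_antiAdj hab.symm.antiAdj
  · exact (stronglyAnticomplete_singleton.1 hc a ha).not_adj hab.symm.adj

end SquareConnected

namespace IsThickening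

variable {G : Trigraph V} {H : Trigraph W} {J : W → Set V} {t u : W} {x y : V}

theorem nonempty (hth : G.IsThickening H J) (t : W) : (J t).Nonempty := (hth.1 t).1

theorem isStrongClique (hth : G.IsThickening H J) (t : W) : G.IsStrongClique (J t) :=
  (hth.1 t).2

theorem eq_of_mem (hth : G.IsThickening H J) (ht : x ∈ J t) (hu : x ∈ J u) : t = u := by
  by_contra hne
  exact (hth.2.1 t u hne).ne_of_mem ht hu rfl

theorem disjoint (hth : G.IsThickening H J) {t u : W} (hne : t ≠ u) : Disjoint (J t) (J u) :=
  hth.2.1 t u hne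

theorem ne_of_mem (hth : G.IsThickening H J) (hne : t ≠ u) (hx : x ∈ J t) (hy : y ∈ J u) :
    x ≠ y := by
  rintro rfl
  exact hne (hth.eq_of_mem hx hy)

theorem exists_mem (hth : G.IsThickening H J) (x : V) : ∃ t, x ∈ J t := by
  have hx : x ∈ ⋃ t, J t := hth.2.2.1 ▸ Set.mem_univ x
  simpa using hx

theorem injective (hth : G.IsThickening H J) : Function.Injective J := by
  intro t u h
  obtain ⟨x, hx⟩ := hth.nonempty t
  exact hth.eq_of_mem hx (h ▸ hx)

theorem finite [Finite V] (hth : G.IsThickening H J) : Finite W :=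
  Finite.of_injective J hth.injective

theorem strongAdj (hth : G.IsThickening H J) (h : H.StrongAdj t u) (hx : x ∈ J t)
    (hy : y ∈ J u) : G.StrongAdj x y :=
  (hth.2.2.2 t u h.ne).1 h x hx y hy

theorem strongAntiAdj (hth : G.IsThickening H J) (h : H.StrongAntiAdj t u) (hx : x ∈ J t)
    (hy : y ∈ J u) : G.StrongAntiAdj x y :=
  (hth.2.2.2 t u h.ne).2.1 h x hx y hy

theorem adj (hth : G.IsThickening H J) (hne : t ≠ u) (hx : x ∈ J t) (hy : y ∈ J u)
    (h : G.Adj x y) : H.Adj t u :=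
  adj_iff_not_strongAntiAdj.2 ⟨hne, fun h' => (hth.strongAntiAdj h' hx hy).not_adj h⟩

theorem antiAdj (hth : G.IsThickening H J) (hne : t ≠ u) (hx : x ∈ J t) (hy : y ∈ J u)
    (h : G.AntiAdj x y) : H.AntiAdj t u :=
  antiAdj_iff_not_strongAdj.2 ⟨hne, fun h' => (hth.strongAdj h' hx hy).not_antiAdj h⟩

theorem semiAdj_iff (hth : G.IsThickening H J) (hne : t ≠ u) :
    H.SemiAdj t u ↔
      (∃ x ∈ J t, ∃ y ∈ J u, G.Adj x y) ∧ (∃ x ∈ J t, ∃ y ∈ J u, G.AntiAdj x y) := by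
  constructor
  · intro h
    obtain ⟨hnc, hna⟩ := (hth.2.2.2 t u hne).2.2 h
    simp only [StronglyComplete, StronglyAnticomplete, not_forall] at hnc hna
    obtain ⟨x, hx, y, hy, hxy⟩ := hna
    obtain ⟨x', hx', y', hy', hxy'⟩ := hnc
    exact ⟨⟨x, hx, y, hy, adj_iff_not_strongAntiAdj.2 ⟨hth.ne_of_mem hne hx hy, hxy⟩⟩,
      ⟨x', hx', y', hy', antiAdj_iff_not_strongAdj.2 ⟨hth.ne_of_mem hne hx' hy', hxy'⟩⟩⟩
  · rintro ⟨⟨x, hx, y, hy, hxy⟩, ⟨x', hx', y', hy', hxy'⟩⟩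
    rcases strongAdj_or_semiAdj_or_strongAntiAdj (G := H) hne with h | h | h
    · exact absurd hxy' (hth.strongAdj h hx' hy').not_antiAdj
    · exact h
    · exact absurd hxy (hth.strongAntiAdj h hx hy).not_adj

theorem adj_of_not_semiAdj (hth : G.IsThickening H J) (h : H.Adj t u)
    (hs : ¬ H.SemiAdj t u) (hx : x ∈ J t) (hy : y ∈ J u) : G.Adj x y := by
  rcases strongAdj_or_semiAdj_or_strongAntiAdj (G := H) h.1 with h' | h' | h'
  · exact (hth.strongAdj h' hx hy).adj
  · exact absurd h' hs
  · exact absurd h h'.not_adj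

theorem antiAdj_of_not_semiAdj (hth : G.IsThickening H J) (h : H.AntiAdj t u)
    (hs : ¬ H.SemiAdj t u) (hx : x ∈ J t) (hy : y ∈ J u) : G.AntiAdj x y := by
  rcases strongAdj_or_semiAdj_or_strongAntiAdj (G := H) h.1 with h' | h' | h'
  · exact absurd h h'.not_antiAdj
  · exact absurd h' hs
  · exact (hth.strongAntiAdj h' hx hy).antiAdj

theorem exists_adj (hth : G.IsThickening H J) (h : H.Adj t u) :
    ∃ x ∈ J t, ∃ y ∈ J u, G.Adj x y := by
  by_cases hs : H.SemiAdj t u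
  · exact ((hth.semiAdj_iff h.1).1 hs).1
  · obtain ⟨x, hx⟩ := hth.nonempty t
    obtain ⟨y, hy⟩ := hth.nonempty u
    exact ⟨x, hx, y, hy, hth.adj_of_not_semiAdj h hs hx hy⟩

theorem exists_antiAdj (hth : G.IsThickening H J) (h : H.AntiAdj t u) :
    ∃ x ∈ J t, ∃ y ∈ J u, G.AntiAdj x y := by
  by_cases hs : H.SemiAdj t u
  · exact ((hth.semiAdj_iff h.1).1 hs).2
  · obtain ⟨x, hx⟩ := hth.nonempty t
    obtain ⟨y, hy⟩ := hth.nonempty u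
    exact ⟨x, hx, y, hy, hth.antiAdj_of_not_semiAdj h hs hx hy⟩

theorem stronglyComplete_or_stronglyAnticomplete (hth : G.IsThickening H J) (hne : t ≠ u)
    (hs : ¬ H.SemiAdj t u) (hx : x ∈ J t) :
    G.StronglyComplete {x} (J u) ∨ G.StronglyAnticomplete {x} (J u) := by
  simp only [stronglyComplete_singleton, stronglyAnticomplete_singleton]
  rcases strongAdj_or_semiAdj_or_strongAntiAdj (G := H) hne with h | h | h
  · exact Or.inl fun y hy => hth.strongAdj h hx hy
  · exact absurd h hs
  · exact Or.inr fun y hy => hth.strongAntiAdj h hx hy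

variable {t₁ t₂ t₃ t₄ : W} {x₁ x₂ x₃ x₄ : V}

theorem isSquare (hth : G.IsThickening H J) (hsq : G.IsSquare x₁ x₂ x₃ x₄) (h₁ : x₁ ∈ J t₁)
    (h₂ : x₂ ∈ J t₂) (h₃ : x₃ ∈ J t₃) (h₄ : x₄ ∈ J t₄) (h₁₂ : t₁ ≠ t₂) (h₂₃ : t₂ ≠ t₃)
    (h₃₄ : t₃ ≠ t₄) (h₄₁ : t₄ ≠ t₁) : H.IsSquare t₁ t₂ t₃ t₄ := by
  obtain ⟨an₁₃, an₂₄, ad₁₂, ad₂₃, ad₃₄, ad₄₁⟩ := hsq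
  have diag : ∀ {t u : W} {x y : V}, x ∈ J t → y ∈ J u → G.AntiAdj x y → t ≠ u := by
    rintro t u x y hx hy hxy rfl
    exact (hth.isStrongClique t).not_antiAdj hx hy hxy
  exact ⟨hth.antiAdj (diag h₁ h₃ an₁₃) h₁ h₃ an₁₃, hth.antiAdj (diag h₂ h₄ an₂₄) h₂ h₄ an₂₄,
    hth.adj h₁₂ h₁ h₂ ad₁₂, hth.adj h₂₃ h₂ h₃ ad₂₃, hth.adj h₃₄ h₃ h₄ ad₃₄,
    hth.adj h₄₁ h₄ h₁ ad₄₁⟩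

theorem exists_isSquare_of_not_semiAdj_diagonal (hth : G.IsThickening H J)
    (hsq : H.IsSquare t₁ t₂ t₃ t₄) (h₁₃ : ¬ H.SemiAdj t₁ t₃) (h₂₄ : ¬ H.SemiAdj t₂ t₄)
    (h₂₃ : ¬ H.SemiAdj t₂ t₃) (h₄₁ : ¬ H.SemiAdj t₄ t₁) :
    ∃ x₁ ∈ J t₁, ∃ x₂ ∈ J t₂, ∃ x₃ ∈ J t₃, ∃ x₄ ∈ J t₄, G.IsSquare x₁ x₂ x₃ x₄ := by
  obtain ⟨an₁₃, an₂₄, ad₁₂, ad₂₃, ad₃₄, ad₄₁⟩ := hsq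
  obtain ⟨x₁, hx₁, x₂, hx₂, a₁₂⟩ := hth.exists_adj ad₁₂
  obtain ⟨x₃, hx₃, x₄, hx₄, a₃₄⟩ := hth.exists_adj ad₃₄
  exact ⟨x₁, hx₁, x₂, hx₂, x₃, hx₃, x₄, hx₄, hth.antiAdj_of_not_semiAdj an₁₃ h₁₃ hx₁ hx₃,
    hth.antiAdj_of_not_semiAdj an₂₄ h₂₄ hx₂ hx₄, a₁₂, hth.adj_of_not_semiAdj ad₂₃ h₂₃ hx₂ hx₃,
    a₃₄, hth.adj_of_not_semiAdj ad₄₁ h₄₁ hx₄ hx₁⟩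

theorem exists_isSquare_of_not_semiAdj_sides (hth : G.IsThickening H J)
    (hsq : H.IsSquare t₁ t₂ t₃ t₄) (h₁₂ : ¬ H.SemiAdj t₁ t₂) (h₂₃ : ¬ H.SemiAdj t₂ t₃)
    (h₃₄ : ¬ H.SemiAdj t₃ t₄) (h₄₁ : ¬ H.SemiAdj t₄ t₁) :
    ∃ x₁ ∈ J t₁, ∃ x₂ ∈ J t₂, ∃ x₃ ∈ J t₃, ∃ x₄ ∈ J t₄, G.IsSquare x₁ x₂ x₃ x₄ := by
  obtain ⟨an₁₃, an₂₄, ad₁₂, ad₂₃, ad₃₄, ad₄₁⟩ := hsq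
  obtain ⟨x₁, hx₁, x₃, hx₃, a₁₃⟩ := hth.exists_antiAdj an₁₃
  obtain ⟨x₂, hx₂, x₄, hx₄, a₂₄⟩ := hth.exists_antiAdj an₂₄
  exact ⟨x₁, hx₁, x₂, hx₂, x₃, hx₃, x₄, hx₄, a₁₃, a₂₄,
    hth.adj_of_not_semiAdj ad₁₂ h₁₂ hx₁ hx₂, hth.adj_of_not_semiAdj ad₂₃ h₂₃ hx₂ hx₃,
    hth.adj_of_not_semiAdj ad₃₄ h₃₄ hx₃ hx₄, hth.adj_of_not_semiAdj ad₄₁ h₄₁ hx₄ hx₁⟩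

/-- Every square of an antithickening lifts. Since the semiadjacent pairs of `H` form a
matching, they all lie in one of the three perfect matchings of `{t₁, t₂, t₃, t₄}`; the
pairs of that matching are lifted jointly, every other pair lifts automatically. -/
theorem exists_isSquare (hth : G.IsThickening H J) (hsq : H.IsSquare t₁ t₂ t₃ t₄) :
    ∃ x₁ ∈ J t₁, ∃ x₂ ∈ J t₂, ∃ x₃ ∈ J t₃, ∃ x₄ ∈ J t₄, G.IsSquare x₁ x₂ x₃ x₄ := by
  have n₁₂ : t₁ ≠ t₂ := hsq.2.2.1.1
  have n₂₃ : t₂ ≠ t₃ := hsq.2.2.2.1.1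
  have n₃₄ : t₃ ≠ t₄ := hsq.2.2.2.2.1.1
  have n₄₁ : t₄ ≠ t₁ := hsq.2.2.2.2.2.1
  have n₁₃ : t₁ ≠ t₃ := hsq.1.1
  have n₂₄ : t₂ ≠ t₄ := hsq.2.1.1
  have excl : ∀ {a b c : W}, H.SemiAdj a b → c ≠ b → ¬ H.SemiAdj a c ∧ ¬ H.SemiAdj c a :=
    fun hab hcb => ⟨fun hac => hcb (hab.unique hac).symm,
      fun hca => hcb (hab.unique hca.symm).symm⟩
  by_cases h₁₃ : H.SemiAdj t₁ t₃
  · exact hth.exists_isSquare_of_not_semiAdj_sides hsq (excl h₁₃ n₂₃).1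
      (excl h₁₃.symm n₁₂.symm).2 (excl h₁₃.symm n₄₁).1 (excl h₁₃ n₃₄.symm).2
  by_cases h₂₄ : H.SemiAdj t₂ t₄
  · exact hth.exists_isSquare_of_not_semiAdj_sides hsq (excl h₂₄ n₄₁.symm).2
      (excl h₂₄ n₃₄).1 (excl h₂₄.symm n₂₃.symm).2 (excl h₂₄.symm n₁₂).1
  have h₃₁ : ¬ H.SemiAdj t₃ t₁ := fun h => h₁₃ h.symm
  by_cases h₁₂ : H.SemiAdj t₁ t₂
  · exact hth.exists_isSquare_of_not_semiAdj_diagonal hsq h₁₃ h₂₄ (excl h₁₂.symm n₁₃.symm).1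
      (excl h₁₂ n₂₄.symm).2
  by_cases h₃₄ : H.SemiAdj t₃ t₄
  · exact hth.exists_isSquare_of_not_semiAdj_diagonal hsq h₁₃ h₂₄ (excl h₃₄ n₂₄).2
      (excl h₃₄.symm n₁₃).1
  obtain ⟨x₂, hx₂, x₃, hx₃, x₄, hx₄, x₁, hx₁, h⟩ :=
    hth.exists_isSquare_of_not_semiAdj_diagonal hsq.rotate h₂₄ h₃₁ h₃₄ h₁₂
  exact ⟨x₁, hx₁, x₂, hx₂, x₃, hx₃, x₄, hx₄, h.rotate.rotate.rotate⟩

end IsThickening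

def blowUp (J : W → Set V) (S : Set W) : Set V := ⋃ t ∈ S, J t

section BlowUp

variable {G : Trigraph V} {H : Trigraph W} {J : W → Set V} {S T : Set W} {t : W} {x : V}

@[simp]
theorem mem_blowUp : x ∈ blowUp J S ↔ ∃ t ∈ S, x ∈ J t := by
  simp [blowUp]

theorem subset_blowUp (ht : t ∈ S) : J t ⊆ blowUp J S := fun _ hx => mem_blowUp.2 ⟨t, ht, hx⟩

theorem blowUp_union : blowUp J (S ∪ T) = blowUp J S ∪ blowUp J T :=
  Set.biUnion_union S T J

theorem blowUp_subset {U : Set V} (h : ∀ t ∈ S, J t ⊆ U) : blowUp J S ⊆ U := by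
  simp only [blowUp, Set.iUnion₂_subset_iff]
  exact h

namespace IsThickening

theorem subset_singleton_of_blowUp_subset (hth : G.IsThickening H J)
    (h : blowUp J S ⊆ J t) : S ⊆ {t} := by
  intro u hu
  obtain ⟨x, hx⟩ := hth.nonempty u
  exact hth.eq_of_mem hx (h (subset_blowUp hu hx))

theorem isStrongClique_blowUp (hth : G.IsThickening H J) (hS : H.IsStrongClique S) :
    G.IsStrongClique (blowUp J S) := by
  intro x hx y hy hxy
  obtain ⟨t, ht, hxt⟩ := mem_blowUp.1 hx
  obtain ⟨u, hu, hyu⟩ := mem_blowUp.1 hy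
  by_cases htu : t = u
  · exact hth.isStrongClique t hxt (htu ▸ hyu) hxy
  · exact hth.strongAdj (hS ht hu htu) hxt hyu

theorem homogeneous_blowUp (hth : G.IsThickening H J) (hx : x ∈ J t)
    (h : H.StronglyComplete {t} S ∨ H.StronglyAnticomplete {t} S) :
    G.StronglyComplete {x} (blowUp J S) ∨ G.StronglyAnticomplete {x} (blowUp J S) := by
  simp only [stronglyComplete_singleton, stronglyAnticomplete_singleton, mem_blowUp,
    forall_exists_index, and_imp] at h ⊢
  exact h.imp (fun h y u hu hy => hth.strongAdj (h u hu) hx hy)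
    (fun h y u hu hy => hth.strongAntiAdj (h u hu) hx hy)

theorem hposc_blowUp (hth : G.IsThickening H J) {A B : Set W} (h : H.HPOSC A B) :
    G.HPOSC (blowUp J A) (blowUp J B) := by
  obtain ⟨⟨a, ha⟩, ⟨b, hb⟩, hAB, hcA, hcB, hns, hhom⟩ := h
  have singleton : ∀ {S : Set W} {x : V}, S.Nonempty → blowUp J S = {x} → ∃ t, S = {t} := by
    intro S x hS hSx
    obtain ⟨t, -, hxt⟩ := mem_blowUp.1 (hSx ▸ Set.mem_singleton x)
    refine ⟨t, hS.subset_singleton_iff.1 (hth.subset_singleton_of_blowUp_subset ?_)⟩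
    exact hSx ▸ Set.singleton_subset_iff.2 hxt
  refine ⟨(hth.nonempty a).mono (subset_blowUp ha), (hth.nonempty b).mono (subset_blowUp hb),
    ?_, hth.isStrongClique_blowUp hcA, hth.isStrongClique_blowUp hcB, ?_, ?_⟩
  · refine Set.disjoint_left.2 fun x hxA hxB => ?_
    obtain ⟨t, ht, hxt⟩ := mem_blowUp.1 hxA
    obtain ⟨u, hu, hxu⟩ := mem_blowUp.1 hxB
    exact hAB.ne_of_mem ht hu (hth.eq_of_mem hxt hxu)
  · rintro ⟨x, y, hx, hy⟩
    obtain ⟨t, rfl⟩ := singleton ⟨a, ha⟩ hx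
    obtain ⟨u, rfl⟩ := singleton ⟨b, hb⟩ hy
    exact hns ⟨t, u, rfl, rfl⟩
  · intro x hx
    obtain ⟨t, hxt⟩ := hth.exists_mem x
    have ht : t ∉ A ∪ B := by
      rintro (ht | ht)
      exacts [hx (Or.inl (subset_blowUp ht hxt)), hx (Or.inr (subset_blowUp ht hxt))]
    exact ⟨hth.homogeneous_blowUp hxt (hhom t ht).1, hth.homogeneous_blowUp hxt (hhom t ht).2⟩

theorem squareMeets_blowUp (hth : G.IsThickening H J) {X P P' : Set W}
    (h : H.SquareMeets X P P') : G.SquareMeets (blowUp J X) (blowUp J P) (blowUp J P') := by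
  obtain ⟨t₁, t₂, t₃, t₄, hsq, hsub, ⟨z, hz, hzP⟩, ⟨z', hz', hz'P'⟩⟩ := h
  obtain ⟨x₁, h₁, x₂, h₂, x₃, h₃, x₄, h₄, hsq'⟩ := hth.exists_isSquare hsq
  have lift : ∀ t ∈ ({t₁, t₂, t₃, t₄} : Set W), ∃ x ∈ ({x₁, x₂, x₃, x₄} : Set V), x ∈ J t := by
    simp only [Set.mem_insert_iff, Set.mem_singleton_iff]
    rintro t (rfl | rfl | rfl | rfl)
    exacts [⟨x₁, by simp, h₁⟩, ⟨x₂, by simp, h₂⟩, ⟨x₃, by simp, h₃⟩, ⟨x₄, by simp, h₄⟩]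
  obtain ⟨y, hy, hyz⟩ := lift z hz
  obtain ⟨y', hy', hyz'⟩ := lift z' hz'
  refine ⟨x₁, x₂, x₃, x₄, hsq', ?_, ⟨y, hy, subset_blowUp hzP hyz⟩,
    ⟨y', hy', subset_blowUp hz'P' hyz'⟩⟩
  simp only [Set.insert_subset_iff, Set.singleton_subset_iff]
  exact ⟨subset_blowUp (hsub (by simp)) h₁, subset_blowUp (hsub (by simp)) h₂,
    subset_blowUp (hsub (by simp)) h₃, subset_blowUp (hsub (by simp)) h₄⟩

end IsThickening

variable {A B : Set W} {U U' : Set V}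

theorem squareMeets_blowUp_of_mem_inter [Finite V]
    (hpair : ∀ t, 2 ≤ (J t).ncard → ∃ u, H.SemiAdj t u ∧ G.SquareConnected (J t) (J u))
    (h : H.HPOSC A B) {t : W} (ht : t ∈ A) {x x' : V} (hx : x ∈ J t ∩ U)
    (hx' : x' ∈ J t ∩ U') (hUU' : U ∪ U' = blowUp J A) (hd : Disjoint U U') :
    G.SquareMeets (blowUp J A ∪ blowUp J B) U U' := by
  obtain ⟨u, htu, hsc⟩ :=
    hpair t ((Set.one_lt_ncard).2 ⟨x, hx.1, x', hx'.1, hd.ne_of_mem hx.2 hx'.2⟩)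
  have hJt : J t ∩ U ∪ J t ∩ U' = J t := by
    rw [← Set.inter_union_distrib_left, Set.inter_eq_left, hUU']
    exact subset_blowUp ht
  exact (hsc.2.1 _ _ ⟨x, hx⟩ ⟨x', hx'⟩ hJt
    (hd.mono Set.inter_subset_right Set.inter_subset_right)).mono
    (Set.union_subset_union (subset_blowUp ht) (subset_blowUp (h.mem_right_of_semiAdj ht htu)))
    Set.inter_subset_right Set.inter_subset_right

namespace IsThickening

theorem squareMeets_blowUp_of_forall_subset (hth : G.IsThickening H J)
    (h : H.SquareConnected A B) (hsplit : ∀ t ∈ A, J t ⊆ U ∨ J t ⊆ U') (hU : U.Nonempty)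
    (hU' : U'.Nonempty) (hUU' : U ∪ U' = blowUp J A) (hd : Disjoint U U') :
    G.SquareMeets (blowUp J A ∪ blowUp J B) U U' := by
  have hP : ∀ {U U' : Set V}, U.Nonempty → Disjoint U U' → U ⊆ blowUp J A →
      (∀ t ∈ A, J t ⊆ U ∨ J t ⊆ U') → {t | t ∈ A ∧ J t ⊆ U}.Nonempty := by
    rintro U U' ⟨x, hx⟩ hd hUA hsplit
    obtain ⟨t, ht, hxt⟩ := mem_blowUp.1 (hUA hx)
    exact ⟨t, ht, (hsplit t ht).resolve_right fun h' => hd.ne_of_mem hx (h' hxt) rfl⟩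
  refine (hth.squareMeets_blowUp (h.2.1 {t | t ∈ A ∧ J t ⊆ U} {t | t ∈ A ∧ J t ⊆ U'}
    (hP hU hd (hUU' ▸ Set.subset_union_left) hsplit)
    (hP hU' hd.symm (hUU' ▸ Set.subset_union_right) fun t ht => (hsplit t ht).symm)
    ?_ ?_)).mono blowUp_union.subset (blowUp_subset fun t ht => ht.2)
    (blowUp_subset fun t ht => ht.2)
  · ext t
    exact ⟨fun ht => ht.elim And.left And.left,
      fun ht => (hsplit t ht).imp (And.intro ht) (And.intro ht)⟩
  · refine Set.disjoint_left.2 fun t ht ht' => ?_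
    obtain ⟨x, hx⟩ := hth.nonempty t
    exact hd.ne_of_mem (ht.2 hx) (ht'.2 hx) rfl

theorem squareConnected_blowUp [Finite V] (hth : G.IsThickening H J)
    (hpair : ∀ t, 2 ≤ (J t).ncard → ∃ u, H.SemiAdj t u ∧ G.SquareConnected (J t) (J u))
    (h : H.SquareConnected A B) : G.SquareConnected (blowUp J A) (blowUp J B) := by
  have left : ∀ {A B : Set W}, H.SquareConnected A B → ∀ U U' : Set V, U.Nonempty →
      U'.Nonempty → U ∪ U' = blowUp J A → Disjoint U U' →
      G.SquareMeets (blowUp J A ∪ blowUp J B) U U' := by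
    intro A B h U U' hU hU' hUU' hd
    by_cases hsplit : ∀ t ∈ A, J t ⊆ U ∨ J t ⊆ U'
    · exact hth.squareMeets_blowUp_of_forall_subset h hsplit hU hU' hUU' hd
    push Not at hsplit
    obtain ⟨t, ht, hnU, hnU'⟩ := hsplit
    obtain ⟨x, hxt, hxU⟩ := Set.not_subset.1 hnU
    obtain ⟨x', hx't, hx'U'⟩ := Set.not_subset.1 hnU'
    have hJt : J t ⊆ U ∪ U' := hUU' ▸ subset_blowUp ht
    exact squareMeets_blowUp_of_mem_inter hpair h.1 ht
      ⟨hx't, (hJt hx't).resolve_right hx'U'⟩ ⟨hxt, (hJt hxt).resolve_left hxU⟩ hUU' hd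
  exact ⟨hth.hposc_blowUp h.1, left h,
    fun U U' hU hU' hUU' hd => Set.union_comm (blowUp J B) _ ▸ left h.symm U U' hU hU' hUU' hd⟩

theorem laminar [Finite V] (hth : G.IsThickening H J)
    (hpair : ∀ t, 2 ≤ (J t).ncard → ∃ u, H.SemiAdj t u ∧ G.SquareConnected (J t) (J u))
    (hcover : ∀ X Y, G.SquareConnected X Y → ∃ t, X ⊆ J t) : H.Laminar := by
  rintro ⟨A, B, h⟩
  have hsc := hth.squareConnected_blowUp hpair h
  obtain ⟨a, ha⟩ := hcover _ _ hsc
  obtain ⟨b, hb⟩ := hcover _ _ hsc.symm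
  obtain ⟨hA, hB, -, -, -, hns, -⟩ := h.1
  exact hns ⟨a, b, hA.subset_singleton_iff.1 (hth.subset_singleton_of_blowUp_subset ha),
    hB.subset_singleton_iff.1 (hth.subset_singleton_of_blowUp_subset hb)⟩

end IsThickening

end BlowUp

section Crossing

variable {G : Trigraph V} {H : Trigraph W} {J : W → Set V} {A B : Set V} {w p : W}
  {a b a' b' : V}

namespace IsThickening

theorem semiAdj_of_antiAdj (hth : G.IsThickening H J) {K : Set V} (hK : G.IsStrongClique K)
    {k x y : V} {u : W} (hk : k ∈ J w ∩ K) (hx : x ∈ J w) (hy : y ∈ J u ∩ K)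
    (hxy : G.AntiAdj x y) : H.SemiAdj w u := by
  have hwu : w ≠ u := by
    rintro rfl
    exact (hth.isStrongClique w).not_antiAdj hx hy.1 hxy
  exact (hth.semiAdj_iff hwu).2 ⟨⟨k, hk.1, y, hy.1, hK.adj hk.2 hy.2 (hth.ne_of_mem hwu hk.1 hy.1)⟩,
    ⟨x, hx, y, hy.1, hxy⟩⟩

theorem mem_of_antiAdj (hth : G.IsThickening H J) (hA : G.IsStrongClique A)
    (hB : G.IsStrongClique B) (hwp : H.SemiAdj w p) (ha : a ∈ J w ∩ A) (hb : b ∈ J w ∩ B)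
    {x y : V} (hx : x ∈ J w) (hy : y ∈ A ∪ B) (hxy : G.AntiAdj x y) : y ∈ J p := by
  obtain ⟨u, hyu⟩ := hth.exists_mem y
  have hwu : H.SemiAdj w u := hy.elim
    (fun hyA => hth.semiAdj_of_antiAdj hA ha hx ⟨hyu, hyA⟩ hxy)
    (fun hyB => hth.semiAdj_of_antiAdj hB hb hx ⟨hyu, hyB⟩ hxy)
  exact hwp.unique hwu ▸ hyu

theorem hposc_inter_union (hth : G.IsThickening H J) (hAB : G.HPOSC A B)
    (hwp : H.SemiAdj w p) (ha : a ∈ J w ∩ A) (hb : b ∈ J w ∩ B) (ha' : a' ∈ J p ∩ A)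
    (hb' : b' ∈ J p ∩ B) : G.HPOSC (J w ∩ (A ∪ B)) (J p ∩ (A ∪ B)) := by
  have hab : a ≠ b := hAB.disjoint.ne_of_mem ha.2 hb.2
  refine ⟨⟨a, ha.1, Or.inl ha.2⟩, ⟨a', ha'.1, Or.inl ha'.2⟩,
    (hth.disjoint hwp.1).mono Set.inter_subset_left Set.inter_subset_left,
    (hth.isStrongClique w).mono Set.inter_subset_left,
    (hth.isStrongClique p).mono Set.inter_subset_left, ?_, fun v hv => ?_⟩
  · rintro ⟨x, y, hx, -⟩
    have hax : a ∈ ({x} : Set V) := hx ▸ (⟨ha.1, Or.inl ha.2⟩ : a ∈ J w ∩ (A ∪ B))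
    have hbx : b ∈ ({x} : Set V) := hx ▸ (⟨hb.1, Or.inr hb.2⟩ : b ∈ J w ∩ (A ∪ B))
    exact hab (hax.trans hbx.symm)
  have hcomplete : ∀ {t : W} {a b : V}, a ∈ J t ∩ A → b ∈ J t ∩ B → v ∈ J t →
      v ∉ J t ∩ (A ∪ B) → G.StronglyComplete {v} (A ∪ B) := by
    intro t a b ha hb hvt hv
    have hvAB : v ∉ A ∪ B := fun h => hv ⟨hvt, h⟩
    have hne : ∀ {x : V}, x ∈ A ∪ B → v ≠ x := fun hx hvx => hvAB (hvx ▸ hx)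
    exact hAB.stronglyComplete_union hvAB ha.2 hb.2
      ((hth.isStrongClique t).adj hvt ha.1 (hne (Or.inl ha.2)))
      ((hth.isStrongClique t).adj hvt hb.1 (hne (Or.inr hb.2)))
  obtain ⟨t, hvt⟩ := hth.exists_mem v
  by_cases htw : t = w
  · subst htw
    have h := hcomplete ha hb hvt fun h => hv (Or.inl h)
    exact ⟨Or.inl (h.mono subset_rfl Set.inter_subset_right),
      Or.inl (h.mono subset_rfl Set.inter_subset_right)⟩
  by_cases htp : t = p
  · subst htp
    have h := hcomplete ha' hb' hvt fun h => hv (Or.inr h)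
    exact ⟨Or.inl (h.mono subset_rfl Set.inter_subset_right),
      Or.inl (h.mono subset_rfl Set.inter_subset_right)⟩
  have hw := hth.stronglyComplete_or_stronglyAnticomplete htw
    (fun h => htp (hwp.unique h.symm).symm) hvt
  have hp := hth.stronglyComplete_or_stronglyAnticomplete htp
    (fun h => htw (hwp.symm.unique h.symm).symm) hvt
  exact ⟨hw.imp (·.mono subset_rfl Set.inter_subset_left) (·.mono subset_rfl Set.inter_subset_left),
    hp.imp (·.mono subset_rfl Set.inter_subset_left) (·.mono subset_rfl Set.inter_subset_left)⟩

theorem exists_isSquare_of_semiAdj [Finite V] (hth : G.IsThickening H J)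
    (hsc : G.SquareConnected A B) (hwp : H.SemiAdj w p) (ha : a ∈ J w ∩ A)
    (hb : b ∈ J w ∩ B) : ∃ b' ∈ J p ∩ B, ∃ a' ∈ J p ∩ A, G.IsSquare a b b' a' := by
  have hA := hsc.1.isStrongClique_left
  have hB := hsc.1.isStrongClique_right
  obtain ⟨b', hb'B, hab'⟩ := (hsc.exists_antiAdj_and_exists_adj ha.2).1
  obtain ⟨a', ha'A, hba'⟩ := (hsc.symm.exists_antiAdj_and_exists_adj hb.2).1
  have hb'p := hth.mem_of_antiAdj hA hB hwp ha hb ha.1 (Or.inr hb'B) hab'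
  have ha'p := hth.mem_of_antiAdj hA hB hwp ha hb hb.1 (Or.inl ha'A) hba'
  refine ⟨b', ⟨hb'p, hb'B⟩, a', ⟨ha'p, ha'A⟩, hab', hba',
    (hth.isStrongClique w).adj ha.1 hb.1 (hsc.1.disjoint.ne_of_mem ha.2 hb.2),
    hB.adj hb.2 hb'B (hth.ne_of_mem hwp.1 hb.1 hb'p),
    (hth.isStrongClique p).adj hb'p ha'p (hsc.1.disjoint.ne_of_mem ha'A hb'B).symm,
    hA.adj ha'A ha.2 (hth.ne_of_mem hwp.1 ha.1 ha'p).symm⟩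

theorem squareMeets_inter_union [Finite V] (hth : G.IsThickening H J)
    (hsc : G.SquareConnected A B) (hwp : H.SemiAdj w p) (ha : a ∈ J w ∩ A)
    (hb : b ∈ J w ∩ B) {U U' : Set V} (hU : U.Nonempty) (hU' : U'.Nonempty)
    (hUU' : U ∪ U' = J w ∩ (A ∪ B)) (hd : Disjoint U U') :
    G.SquareMeets (J w ∩ (A ∪ B) ∪ J p ∩ (A ∪ B)) U U' := by
  rw [Set.inter_union_distrib_left] at hUU'
  obtain ⟨a₀, ha₀, b₀, hb₀, hsep⟩ := exists_separated_of_union_eq ⟨a, ha⟩ ⟨b, hb⟩ hU hU' hUU' hd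
  obtain ⟨b', hb', a', ha', hsq⟩ := hth.exists_isSquare_of_semiAdj hsc hwp ha₀ hb₀
  refine ⟨a₀, b₀, b', a', hsq, ?_, ?_⟩
  · simp only [Set.insert_subset_iff, Set.singleton_subset_iff]
    exact ⟨Or.inl ⟨ha₀.1, Or.inl ha₀.2⟩, Or.inl ⟨hb₀.1, Or.inr hb₀.2⟩,
      Or.inr ⟨hb'.1, Or.inr hb'.2⟩, Or.inr ⟨ha'.1, Or.inl ha'.2⟩⟩
  · rcases hsep with ⟨h, h'⟩ | ⟨h, h'⟩
    exacts [⟨⟨a₀, by simp, h⟩, ⟨b₀, by simp, h'⟩⟩, ⟨⟨b₀, by simp, h'⟩, ⟨a₀, by simp, h⟩⟩]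

theorem squareConnected_inter_union [Finite V] (hth : G.IsThickening H J)
    (hsc : G.SquareConnected A B) (hwp : H.SemiAdj w p) (ha : a ∈ J w ∩ A)
    (hb : b ∈ J w ∩ B) (ha' : a' ∈ J p ∩ A) (hb' : b' ∈ J p ∩ B) :
    G.SquareConnected (J w ∩ (A ∪ B)) (J p ∩ (A ∪ B)) :=
  ⟨hth.hposc_inter_union hsc.1 hwp ha hb ha' hb',
    fun _ _ hU hU' hUU' hd => hth.squareMeets_inter_union hsc hwp ha hb hU hU' hUU' hd,
    fun _ _ hU hU' hUU' hd => Set.union_comm (J p ∩ (A ∪ B)) _ ▸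
      hth.squareMeets_inter_union hsc hwp.symm ha' hb' hU hU' hUU' hd⟩

/-- The class `w` and its semiadjacent partner, cut down to `A ∪ B`, form such a pair. -/
theorem exists_squareConnected_of_mem_of_mem [Finite V] (hth : G.IsThickening H J)
    (hsc : G.SquareConnected A B) (ha : a ∈ J w ∩ A) (hb : b ∈ J w ∩ B) :
    ∃ X Y, G.SquareConnected X Y ∧ (X ∩ A).Nonempty ∧ (X ∩ B).Nonempty := by
  obtain ⟨b', hb'B, hab'⟩ := (hsc.exists_antiAdj_and_exists_adj ha.2).1
  obtain ⟨p, hb'p⟩ := hth.exists_mem b'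
  have hwp := hth.semiAdj_of_antiAdj hsc.1.isStrongClique_right hb ha.1 ⟨hb'p, hb'B⟩ hab'
  obtain ⟨b'', hb'', a', ha', -⟩ := hth.exists_isSquare_of_semiAdj hsc hwp ha hb
  exact ⟨_, _, hth.squareConnected_inter_union hsc hwp ha hb ha' hb'',
    ⟨a, ⟨ha.1, Or.inl ha.2⟩, ha.2⟩, ⟨b, ⟨hb.1, Or.inr hb.2⟩, hb.2⟩⟩

end IsThickening

end Crossing

def classesMeeting (J : W → Set V) (S : Set V) : Set W := {t | (J t ∩ S).Nonempty}

section ClassesMeeting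

variable {G : Trigraph V} {H : Trigraph W} {J : W → Set V} {A B : Set V}

theorem classesMeeting_union :
    classesMeeting J (A ∪ B) = classesMeeting J A ∪ classesMeeting J B := by
  ext t
  simp [classesMeeting, Set.inter_union_distrib_left, Set.union_nonempty]

theorem IsThickening.ncard_classesMeeting_le [Finite V] (hth : G.IsThickening H J) (S : Set V) :
    (classesMeeting J S).ncard ≤ S.ncard := by
  have := hth.finite
  choose c hc using hth.exists_mem
  calc (classesMeeting J S).ncard ≤ (c '' S).ncard := by
        refine Set.ncard_le_ncard fun t ⟨x, hxt, hxS⟩ => ⟨x, hxS, ?_⟩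
        exact hth.eq_of_mem (hc x) hxt
    _ ≤ S.ncard := Set.ncard_image_le

theorem IsThickening.isSquare_of_mem_inter (hth : G.IsThickening H J)
    (hAB : Disjoint (classesMeeting J A) (classesMeeting J B)) {t t' u u' : W} {a a' b b' : V}
    (hsq : G.IsSquare a a' b b') (ha : a ∈ J t ∩ A) (ha' : a' ∈ J t' ∩ A) (hb : b ∈ J u ∩ B)
    (hb' : b' ∈ J u' ∩ B) (htt' : t ≠ t') : H.IsSquare t t' u u' := by
  have hne : ∀ {t u : W} {a b : V}, a ∈ J t ∩ A → b ∈ J u ∩ B → t ≠ u :=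
    fun ha hb => hAB.ne_of_mem ⟨_, ha⟩ ⟨_, hb⟩
  have huu' : u ≠ u' := by
    rintro rfl
    have h₁ : H.SemiAdj u t := ((hth.semiAdj_iff (hne ha hb)).2
      ⟨⟨a, ha.1, b', hb'.1, hsq.2.2.2.2.2.symm⟩, ⟨a, ha.1, b, hb.1, hsq.1⟩⟩).symm
    have h₂ : H.SemiAdj u t' := ((hth.semiAdj_iff (hne ha' hb)).2
      ⟨⟨a', ha'.1, b, hb.1, hsq.2.2.2.1⟩, ⟨a', ha'.1, b', hb'.1, hsq.2.1⟩⟩).symm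
    exact htt' (h₁.unique h₂)
  exact hth.isSquare hsq ha.1 ha'.1 hb.1 hb'.1 htt' (hne ha' hb) huu' (hne ha hb').symm

theorem IsThickening.squareMeets_classesMeeting (hth : G.IsThickening H J)
    (hsc : G.SquareConnected A B)
    (hAB : Disjoint (classesMeeting J A) (classesMeeting J B)) {P P' : Set W}
    (hP : P.Nonempty) (hP' : P'.Nonempty) (hPP' : P ∪ P' = classesMeeting J A)
    (hd : Disjoint P P') :
    H.SquareMeets (classesMeeting J A ∪ classesMeeting J B) P P' := by
  have hne : ∀ {P}, P.Nonempty → P ⊆ classesMeeting J A → (A ∩ blowUp J P).Nonempty := by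
    rintro P ⟨t, ht⟩ hPA
    obtain ⟨a, hat, ha⟩ := hPA ht
    exact ⟨a, ha, subset_blowUp ht hat⟩
  have hUU' : A ∩ blowUp J P ∪ A ∩ blowUp J P' = A := by
    rw [← Set.inter_union_distrib_left, ← blowUp_union, Set.inter_eq_left]
    intro a ha
    obtain ⟨t, hat⟩ := hth.exists_mem a
    exact subset_blowUp (hPP' ▸ ⟨a, hat, ha⟩ : t ∈ P ∪ P') hat
  have hdU : Disjoint (A ∩ blowUp J P) (A ∩ blowUp J P') := by
    refine Set.disjoint_left.2 fun a ⟨_, ha⟩ ⟨_, ha'⟩ => ?_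
    obtain ⟨t, ht, hat⟩ := mem_blowUp.1 ha
    obtain ⟨t', ht', hat'⟩ := mem_blowUp.1 ha'
    exact hd.ne_of_mem ht ht' (hth.eq_of_mem hat hat')
  obtain ⟨v₁, v₂, v₃, v₄, hsq, hsub, ⟨z, hz, hzA, hzP⟩, ⟨z', hz', hz'A, hz'P'⟩⟩ :=
    hsc.2.1 _ _ (hne hP (hPP' ▸ Set.subset_union_left))
      (hne hP' (hPP' ▸ Set.subset_union_right)) hUU' hdU
  obtain ⟨b, hb, b', hb', hsq'⟩ := hsq.exists_isSquare_of_mem_left hsc.1.isStrongClique_left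
    hsub hz hz' hzA hz'A (hdU.ne_of_mem ⟨hzA, hzP⟩ ⟨hz'A, hz'P'⟩)
  obtain ⟨t, ht, hzt⟩ := mem_blowUp.1 hzP
  obtain ⟨t', ht', hz't'⟩ := mem_blowUp.1 hz'P'
  obtain ⟨u, hbu⟩ := hth.exists_mem b
  obtain ⟨u', hb'u'⟩ := hth.exists_mem b'
  refine ⟨t, t', u, u', hth.isSquare_of_mem_inter hAB hsq' ⟨hzt, hzA⟩ ⟨hz't', hz'A⟩ ⟨hbu, hb⟩
    ⟨hb'u', hb'⟩ (hd.ne_of_mem ht ht'), ?_, ⟨t, by simp, ht⟩, ⟨t', by simp, ht'⟩⟩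
  simp only [Set.insert_subset_iff, Set.singleton_subset_iff]
  exact ⟨Or.inl (hPP' ▸ Or.inl ht), Or.inl (hPP' ▸ Or.inr ht'), Or.inr ⟨b, hbu, hb⟩,
    Or.inr ⟨b', hb'u', hb'⟩⟩

end ClassesMeeting

namespace IsThickening

variable [Finite V] {G : Trigraph V} {H : Trigraph W} {J : W → Set V} {A B : Set V}
  {t u : W} {x : V}

theorem ncard_classesMeeting_le_one (hth : G.IsThickening H J) (hsc : G.SquareConnected A B)
    (hAB : Disjoint (classesMeeting J A) (classesMeeting J B))
    (hB : (classesMeeting J B).ncard ≤ 1) : (classesMeeting J A).ncard ≤ 1 := by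
  have := hth.finite
  obtain ⟨-, ⟨b, hb⟩, -⟩ := hsc.1
  obtain ⟨s, hbs⟩ := hth.exists_mem b
  have hBs : B ⊆ J s := fun b' hb' => by
    obtain ⟨s', hb's'⟩ := hth.exists_mem b'
    exact (Set.ncard_le_one_iff).1 hB ⟨b', hb's', hb'⟩ ⟨b, hbs, hb⟩ ▸ hb's'
  have hsemi : ∀ t ∈ classesMeeting J A, H.SemiAdj s t := by
    rintro t ⟨a, hat, ha⟩
    have hts : t ≠ s := hAB.ne_of_mem ⟨a, hat, ha⟩ ⟨b, hbs, hb⟩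
    obtain ⟨⟨b₁, hb₁, hab₁⟩, ⟨b₂, hb₂, hab₂⟩⟩ := hsc.exists_antiAdj_and_exists_adj ha
    exact ((hth.semiAdj_iff hts).2 ⟨⟨a, hat, b₂, hBs hb₂, hab₂⟩,
      ⟨a, hat, b₁, hBs hb₁, hab₁⟩⟩).symm
  exact (Set.ncard_le_one_iff).2 fun ht ht' => (hsemi _ ht).unique (hsemi _ ht')

theorem exists_semiAdj_of_not_mem (hth : G.IsThickening H J) (hsc : G.SquareConnected A B)
    (hAB : Disjoint (classesMeeting J A) (classesMeeting J B)) (ht : t ∈ classesMeeting J A)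
    (hx : x ∈ J t) (hxAB : x ∉ A ∪ B) : ∃ u ∈ classesMeeting J B, H.SemiAdj t u := by
  obtain ⟨a, hat, ha⟩ := ht
  have hxa : G.StrongAdj x a := hth.isStrongClique t hx hat fun h => hxAB (h ▸ Or.inl ha)
  obtain ⟨⟨b, hb, hab⟩, ⟨b', hb', hab'⟩⟩ := hsc.exists_antiAdj_and_exists_adj ha
  have semi : ∀ {b : V}, b ∈ B → ∀ {y y' : V}, y ∈ J t → y' ∈ J t → G.Adj y b →
      G.AntiAdj y' b → ∃ u ∈ classesMeeting J B, H.SemiAdj t u := by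
    intro b hb y y' hy hy' hyb hy'b
    obtain ⟨u, hbu⟩ := hth.exists_mem b
    have htu : t ≠ u := hAB.ne_of_mem ⟨a, hat, ha⟩ ⟨b, hbu, hb⟩
    exact ⟨u, ⟨b, hbu, hb⟩, (hth.semiAdj_iff htu).2 ⟨⟨y, hy, b, hbu, hyb⟩,
      ⟨y', hy', b, hbu, hy'b⟩⟩⟩
  have hxAB' : x ∉ B ∪ A := by rwa [Set.union_comm]
  rcases hsc.1.symm.homogeneous_left hxAB' with hc | hc
  · exact semi hb hx hat (stronglyComplete_singleton.1 hc b hb).adj hab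
  · exact semi hb' hat hx hab' (stronglyAnticomplete_singleton.1 hc b' hb').antiAdj

theorem subset_of_semiAdj (hth : G.IsThickening H J) (hsc : G.SquareConnected A B)
    (hAB : Disjoint (classesMeeting J A) (classesMeeting J B)) (ht : t ∈ classesMeeting J A)
    (htu : H.SemiAdj t u) (hu : u ∉ classesMeeting J B) : J t ⊆ A := by
  intro x hx
  by_contra hxA
  have hxB : x ∉ B := fun hxB => hAB.ne_of_mem ht ⟨x, hx, hxB⟩ rfl
  obtain ⟨u', hu', htu'⟩ := hth.exists_semiAdj_of_not_mem hsc hAB ht hx (by simp [hxA, hxB])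
  exact hu (htu.unique htu' ▸ hu')

theorem isStrongClique_classesMeeting (hth : G.IsThickening H J) (hsc : G.SquareConnected A B)
    (hAB : Disjoint (classesMeeting J A) (classesMeeting J B)) :
    H.IsStrongClique (classesMeeting J A) := by
  intro t ht t' ht' hne
  have hA := hsc.1.isStrongClique_left
  rcases strongAdj_or_semiAdj_or_strongAntiAdj (G := H) hne with h | h | h
  · exact h
  · have ht'B : t' ∉ classesMeeting J B := fun h => hAB.ne_of_mem ht' h rfl
    have htB : t ∉ classesMeeting J B := fun h => hAB.ne_of_mem ht h rfl
    obtain ⟨-, ⟨y, hy, y', hy', hyy'⟩⟩ := (hth.semiAdj_iff hne).1 h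
    exact absurd hyy' (hA.not_antiAdj (hth.subset_of_semiAdj hsc hAB ht h ht'B hy)
      (hth.subset_of_semiAdj hsc hAB ht' h.symm htB hy'))
  · obtain ⟨a, hat, ha⟩ := ht
    obtain ⟨a', hat', ha'⟩ := ht'
    exact absurd (hth.strongAntiAdj h hat hat').antiAdj
      (hA.not_antiAdj ha ha')

theorem not_semiAdj_of_not_mem (hth : G.IsThickening H J) (hsc : G.SquareConnected A B)
    (hAB : Disjoint (classesMeeting J A) (classesMeeting J B))
    (hA2 : 2 ≤ (classesMeeting J A).ncard)
    (hu : u ∉ classesMeeting J A ∪ classesMeeting J B) (ht : t ∈ classesMeeting J A) :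
    ¬ H.SemiAdj u t := by
  intro hut
  have hJt : J t ⊆ A := hth.subset_of_semiAdj hsc hAB ht hut.symm fun h => hu (Or.inr h)
  have hout : ∀ {x}, x ∈ J u → x ∉ A ∪ B := fun hx hxAB =>
    hu (hxAB.imp (fun hxA => ⟨_, hx, hxA⟩) fun hxB => ⟨_, hx, hxB⟩)
  obtain ⟨⟨x, hx, y, hy, hxy⟩, ⟨x', hx', y', hy', hxy'⟩⟩ := (hth.semiAdj_iff hut.1).1 hut
  have hc := hsc.1.stronglyComplete_of_adj (hout hx) (hJt hy) hxy
  have ha := hsc.1.stronglyAnticomplete_of_antiAdj (hout hx') (hJt hy') hxy'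
  obtain ⟨t', ht', ht't⟩ := Set.exists_ne_of_one_lt_ncard hA2 t
  obtain ⟨a, hat', haA⟩ := ht'
  have hut' : u ≠ t' := fun h => hu (Or.inl (h ▸ ⟨a, hat', haA⟩))
  have hut'' : H.SemiAdj u t' := (hth.semiAdj_iff hut').2
    ⟨⟨x, hx, a, hat', (stronglyComplete_singleton.1 hc a haA).adj⟩,
      ⟨x', hx', a, hat', (stronglyAnticomplete_singleton.1 ha a haA).antiAdj⟩⟩
  exact ht't (hut.unique hut'').symm

theorem homogeneous_classesMeeting (hth : G.IsThickening H J) (hsc : G.SquareConnected A B)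
    (hAB : Disjoint (classesMeeting J A) (classesMeeting J B))
    (hA2 : 2 ≤ (classesMeeting J A).ncard)
    (hu : u ∉ classesMeeting J A ∪ classesMeeting J B) :
    H.StronglyComplete {u} (classesMeeting J A) ∨
      H.StronglyAnticomplete {u} (classesMeeting J A) := by
  obtain ⟨x, hx⟩ := hth.nonempty u
  have hxAB : x ∉ A ∪ B := fun hxAB =>
    hu (hxAB.imp (fun hxA => ⟨x, hx, hxA⟩) fun hxB => ⟨x, hx, hxB⟩)
  have trich : ∀ t ∈ classesMeeting J A, H.StrongAdj u t ∨ H.StrongAntiAdj u t := by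
    intro t ht
    have hut : u ≠ t := fun h => hu (Or.inl (h ▸ ht))
    rcases strongAdj_or_semiAdj_or_strongAntiAdj (G := H) hut with h | h | h
    exacts [Or.inl h, absurd h (hth.not_semiAdj_of_not_mem hsc hAB hA2 hu ht), Or.inr h]
  simp only [stronglyComplete_singleton, stronglyAnticomplete_singleton]
  rcases hsc.1.homogeneous_left hxAB with hc | hc
  · refine Or.inl fun t ht => (trich t ht).resolve_right fun h => ?_
    obtain ⟨a, hat, ha⟩ := ht
    exact (hth.strongAntiAdj h hx hat).not_adj (stronglyComplete_singleton.1 hc a ha).adj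
  · refine Or.inr fun t ht => (trich t ht).resolve_left fun h => ?_
    obtain ⟨a, hat, ha⟩ := ht
    exact (hth.strongAdj h hx hat).not_antiAdj (stronglyAnticomplete_singleton.1 hc a ha).antiAdj

theorem squareConnected_classesMeeting (hth : G.IsThickening H J)
    (hsc : G.SquareConnected A B) (hAB : Disjoint (classesMeeting J A) (classesMeeting J B))
    (hA2 : 2 ≤ (classesMeeting J A).ncard) (hB2 : 2 ≤ (classesMeeting J B).ncard) :
    H.SquareConnected (classesMeeting J A) (classesMeeting J B) := by
  have := hth.finite
  refine ⟨⟨Set.nonempty_of_ncard_ne_zero (by omega), Set.nonempty_of_ncard_ne_zero (by omega),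
    hAB, hth.isStrongClique_classesMeeting hsc hAB,
    hth.isStrongClique_classesMeeting hsc.symm hAB.symm, fun ⟨t, _, ht, _⟩ => by simp [ht] at hA2,
    fun u hu => ⟨hth.homogeneous_classesMeeting hsc hAB hA2 hu,
      hth.homogeneous_classesMeeting hsc.symm hAB.symm hB2 (by rwa [Set.union_comm])⟩⟩,
    fun _ _ hP hP' hPP' hd => hth.squareMeets_classesMeeting hsc hAB hP hP' hPP' hd,
    fun _ _ hP hP' hPP' hd => Set.union_comm (classesMeeting J B) _ ▸
      hth.squareMeets_classesMeeting hsc.symm hAB.symm hP hP' hPP' hd⟩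

/-- If three classes met `A ∪ B`, the classes meeting `A` and those meeting `B` would form a
square-connected pair of `H`. -/
theorem ncard_classesMeeting_le_two (hth : G.IsThickening H J) (hH : H.Laminar)
    (hsc : G.SquareConnected A B) (hAB : Disjoint (classesMeeting J A) (classesMeeting J B)) :
    (classesMeeting J (A ∪ B)).ncard ≤ 2 := by
  have := hth.finite
  rw [classesMeeting_union]
  have hunion := Set.ncard_union_le (classesMeeting J A) (classesMeeting J B)
  by_contra h
  have hA2 : 2 ≤ (classesMeeting J A).ncard := by
    by_contra hA
    have := hth.ncard_classesMeeting_le_one hsc.symm hAB.symm (by omega)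
    omega
  have hB2 : 2 ≤ (classesMeeting J B).ncard := by
    by_contra hB
    have := hth.ncard_classesMeeting_le_one hsc hAB (by omega)
    omega
  exact hH ⟨_, _, hth.squareConnected_classesMeeting hsc hAB hA2 hB2⟩

end IsThickening

section Contraction

variable {G : Trigraph V} {G' : Trigraph V'} {I : V' → Set V}

theorem IsThickening.exists_semiAdj_squareConnected (hth : G.IsThickening G' I)
    (hbig : ∀ v : V', 2 ≤ (I v).ncard →
      ∃ A B : Set V, G.MaxSquareConnected A B ∧ (I v = A ∨ I v = B))
    (hmax : ∀ A B : Set V, G.MaxSquareConnected A B →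
      ∃ a b : V', G'.SemiAdj a b ∧ I a = A ∧ I b = B)
    (v : V') (hv : 2 ≤ (I v).ncard) : ∃ u, G'.SemiAdj v u ∧ G.SquareConnected (I v) (I u) := by
  obtain ⟨A, B, hAB, hvAB⟩ := hbig v hv
  obtain ⟨a, b, hab, rfl, rfl⟩ := hmax A B hAB
  rcases hvAB with h | h
  · exact hth.injective h ▸ ⟨b, hab, hAB.1⟩
  · exact hth.injective h ▸ ⟨a, hab.symm, hAB.1.symm⟩

theorem SquareConnected.exists_subset [Finite V]
    (hmax : ∀ A B : Set V, G.MaxSquareConnected A B →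
      ∃ a b : V', G'.SemiAdj a b ∧ I a = A ∧ I b = B)
    {X Y : Set V} (h : G.SquareConnected X Y) : ∃ a, X ⊆ I a := by
  obtain ⟨A, B, hAB, hXA, -⟩ := h.exists_maxSquareConnected
  obtain ⟨a, -, -, rfl, -⟩ := hmax A B hAB
  exact ⟨a, hXA⟩

variable [Finite V]

theorem exists_involutive_semiAdj
    (hpair : ∀ v, 2 ≤ (I v).ncard → ∃ u, G'.SemiAdj v u ∧ G.SquareConnected (I v) (I u)) :
    ∃ p : V' → V', Function.Involutive p ∧ ∀ v,
      (2 ≤ (I v).ncard → G'.SemiAdj v (p v) ∧ G.SquareConnected (I v) (I (p v))) ∧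
      ((I v).ncard < 2 → p v = v) := by
  classical
  choose q hq using hpair
  let p : V' → V' := fun v => if h : 2 ≤ (I v).ncard then q v h else v
  have hp : ∀ v, (2 ≤ (I v).ncard → G'.SemiAdj v (p v) ∧ G.SquareConnected (I v) (I (p v))) ∧
      ((I v).ncard < 2 → p v = v) := fun v =>
    ⟨fun h => by simpa only [p, dif_pos h] using hq v h,
      fun h => by simp only [p, dif_neg (not_le.2 h)]⟩
  refine ⟨p, fun v => ?_, hp⟩
  by_cases hv : 2 ≤ (I v).ncard
  · obtain ⟨hsemi, hsc⟩ := (hp v).1 hv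
    exact (((hp (p v)).1 hsc.two_le_ncard.2).1.unique hsemi.symm)
  · rw [(hp v).2 (by omega), (hp v).2 (by omega)]

theorem IsThickening.disjoint_classesMeeting {H : Trigraph W} {J : W → Set V}
    (hth : G.IsThickening G' I) (hcover : ∀ X Y, G.SquareConnected X Y → ∃ a, X ⊆ I a)
    (hJ : G.IsThickening H J) {v u : V'} (hvu : v ≠ u) (hsc : G.SquareConnected (I v) (I u)) :
    Disjoint (classesMeeting J (I v)) (classesMeeting J (I u)) := by
  refine Set.disjoint_left.2 fun w ⟨x, hxw, hxv⟩ ⟨y, hyw, hyu⟩ => ?_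
  obtain ⟨X, Y, hXY, ⟨x', hx'X, hx'v⟩, ⟨y', hy'X, hy'u⟩⟩ :=
    hJ.exists_squareConnected_of_mem_of_mem hsc ⟨hxw, hxv⟩ ⟨hyw, hyu⟩
  obtain ⟨a, ha⟩ := hcover X Y hXY
  exact hvu ((hth.eq_of_mem (ha hx'X) hx'v).symm.trans (hth.eq_of_mem (ha hy'X) hy'u))

theorem IsThickening.card_le_card_of_laminar {H : Trigraph W} {J : W → Set V}
    (hth : G.IsThickening G' I)
    (hpair : ∀ v, 2 ≤ (I v).ncard → ∃ u, G'.SemiAdj v u ∧ G.SquareConnected (I v) (I u))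
    (hcover : ∀ X Y, G.SquareConnected X Y → ∃ a, X ⊆ I a) (hJ : G.IsThickening H J)
    (hH : H.Laminar) : Nat.card W ≤ Nat.card V' := by
  have := hth.finite
  have := hJ.finite
  obtain ⟨p, hp, hpv⟩ := exists_involutive_semiAdj hpair
  choose f hf using fun w => (hJ.nonempty w).elim fun x hx =>
    (hth.exists_mem x).imp fun v hv => (⟨x, hx, hv⟩ : (J w ∩ I v).Nonempty)
  refine card_le_card_of_involutive p hp f fun v => ?_
  have hfib : {w | f w = v ∨ f w = p v} ⊆ classesMeeting J (I v ∪ I (p v)) := by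
    rintro w (h | h) <;> obtain ⟨x, hxw, hx⟩ := hf w
    exacts [⟨x, hxw, Or.inl (h ▸ hx)⟩, ⟨x, hxw, Or.inr (h ▸ hx)⟩]
  refine (Set.ncard_le_ncard hfib).trans ?_
  by_cases hv : 2 ≤ (I v).ncard
  · obtain ⟨hsemi, hsc⟩ := (hpv v).1 hv
    rw [Set.ncard_pair hsemi.1]
    exact hJ.ncard_classesMeeting_le_two hH hsc
      (hth.disjoint_classesMeeting hcover hJ hsemi.1 hsc)
  · rw [(hpv v).2 (by omega), Set.union_self, Set.pair_eq_singleton, Set.ncard_singleton]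
    exact (hJ.ncard_classesMeeting_le _).trans (by omega)

end Contraction

end Trigraph

theorem contracting_maximal_pairs_is_optimal_general {V V' : Type} [Fintype V]
    (G : Trigraph V)
    (G' : Trigraph V') (I : V' → Set V) (hthick : G.IsThickening G' I)
    (hbig : ∀ v : V', 2 ≤ (I v).ncard →
      ∃ A B : Set V, G.MaxSquareConnected A B ∧ (I v = A ∨ I v = B))
    (hmax : ∀ A B : Set V, G.MaxSquareConnected A B →
      ∃ a b : V', G'.SemiAdj a b ∧ I a = A ∧ I b = B) :
    G.OptimalAntithickening G' I := by
  have hpair := hthick.exists_semiAdj_squareConnected hbig hmax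
  have hcover : ∀ X Y, G.SquareConnected X Y → ∃ a, X ⊆ I a := fun _ _ h => h.exists_subset hmax
  exact ⟨hthick, hthick.laminar hpair hcover,
    fun _ _ _ hJ hH => hthick.card_le_card_of_laminar hpair hcover hJ hH⟩

/-- Let G be a connected non-degenerate trigraph and let G' be an
antithickening of G whose nontrivial preimages are exactly the parts of the
inclusion-maximal square-connected homogeneous pairs of strong cliques of G, each such
pair being the preimage of a semiedge. Then G' is an optimal antithickening of G. -/
theorem contracting_maximal_pairs_is_optimal {V V' : Type} [Fintype V] [Fintype V']
    (G : Trigraph V) (hconn : G.Connected) (hnd : G.NonDegenerate)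
    (G' : Trigraph V') (I : V' → Set V) (hthick : G.IsThickening G' I)
    (hbig : ∀ v : V', 2 ≤ (I v).ncard →
      ∃ A B : Set V, G.MaxSquareConnected A B ∧ (I v = A ∨ I v = B))
    (hmax : ∀ A B : Set V, G.MaxSquareConnected A B →
      ∃ a b : V', G'.SemiAdj a b ∧ I a = A ∧ I b = B) :
    G.OptimalAntithickening G' I :=
  contracting_maximal_pairs_is_optimal_general G G' I hthick hbig hmax
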